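/- With a_n as in the decomposition φ_n = a_n q_n + b_n p_n for odd n = 2s−1 (m = s², d = 2s(n−2)), writing a_n(z,t) = Σ_{k=0}^{m−2} α_k(t) z^k, the relation α_{m−2−k}(t) = (−1)^{n+s+1} t^{d−s} α_k(t^{−1}) holds for all 0 ≤ k ≤ m−2, i.e., t^{d−s}·α_k(1/t) = (−1)^{n+s+1}·α_{m−2−k}(t) as rational function identities. -/

import Mathlib

open Polynomial Finset

/- We work in ℤ[t][z]: the outer variable `X` is z, and `C X` is t. -/

noncomputable def pOdd (s : ℕ) : Polynomial (Polynomial ℤ) :=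
  ∏ i ∈ Icc 1 s, (1 - C X * X ^ (2 * i - 1))

noncomputable def qOdd (s : ℕ) : Polynomial (Polynomial ℤ) :=
  ∏ i ∈ Icc 1 s, (X ^ (2 * i - 1) - C X)

noncomputable def rOdd (n : ℕ) : Polynomial ℤ :=
  ∏ i ∈ Icc 2 (n - 1), (1 - X ^ (2 * i))

noncomputable def phiOdd (n m : ℕ) : Polynomial (Polynomial ℤ) :=
  X ^ (m - 2) * (X ^ 2 - 1) * C (rOdd n)

/-! Specialise `t` to a nonzero `t₀` that is not a root of unity. Then the factors of `p_n` and
`q_n` have no common root, so `p_n, q_n` are coprime and the decomposition of `φ_n` with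
`deg_z a_n < m = deg_z p_n` is unique. Reflecting `z ↦ 1/z` at the parameter `1/t₀` turns
`q_n, p_n` into `(-t₀⁻¹)^s` times themselves at `t₀`, and `φ_n` into `t₀^{-d} φ_n` (because
`t^d r_n(1/t) = -r_n(t)`), so uniqueness gives
`a_n(z, t₀) = (-1)^s t₀^{d-s} z^{m-2} a_n(1/z, 1/t₀)`. Comparing coefficients gives the symmetry
at every rational `t₀ > 1`, and an identity between polynomials that holds at infinitely many
points holds everywhere. -/

namespace Polynomial

section CommRing

variable {R : Type*} [CommRing R]

theorem reflect_prod {ι : Type*} (s : Finset ι) (f : ι → R[X]) (N : ι → ℕ)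
    (h : ∀ i ∈ s, (f i).natDegree ≤ N i) :
    reflect (∑ i ∈ s, N i) (∏ i ∈ s, f i) = ∏ i ∈ s, reflect (N i) (f i) := by
  classical
  induction s using Finset.induction with
  | empty => simp
  | insert j s hj ih =>
    have hs : ∀ i ∈ s, (f i).natDegree ≤ N i := fun i hi => h i (mem_insert_of_mem hi)
    rw [sum_insert hj, prod_insert hj, prod_insert hj,
      reflect_mul _ _ (h j (mem_insert_self j s))
        ((natDegree_prod_le s f).trans (sum_le_sum hs)), ih hs]

variable {K : Type*} [Field K] [Algebra R K]

theorem aeval_reflect {P : R[X]} {N : ℕ} (hN : P.natDegree ≤ N) {t : K} (ht : t ≠ 0) :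
    aeval t (reflect N P) = t ^ N * aeval t⁻¹ P := by
  let _ := invertibleOfNonzero (inv_ne_zero ht)
  have h := eval₂_reflect_mul_pow (algebraMap R K) t⁻¹ N P hN
  rw [invOf_eq_inv, inv_inv] at h
  rw [aeval_def, aeval_def, ← h, mul_left_comm, ← mul_pow, mul_inv_cancel₀ ht, one_pow, mul_one]

theorem pow_mul_aeval_inv_eq_of_infinite {P Q : R[X]} {c : ℕ} {ε : K} {S : Set K}
    (hS : S.Infinite) (h : ∀ u ∈ S, u ^ c * aeval u⁻¹ P = ε * aeval u Q) {t : K} (ht : t ≠ 0) :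
    t ^ c * aeval t⁻¹ P = ε * aeval t Q := by
  set N := P.natDegree
  set F : K[X] := X ^ c * (reflect N P).map (algebraMap R K)
  set G : K[X] := C ε * X ^ N * Q.map (algebraMap R K)
  have hF : ∀ u ≠ 0, F.eval u = u ^ N * (u ^ c * aeval u⁻¹ P) := fun u hu => by
    rw [eval_mul, eval_pow, eval_X, eval_map_algebraMap, aeval_reflect le_rfl hu]; ring
  have hG : ∀ u, G.eval u = u ^ N * (ε * aeval u Q) := fun u => by
    rw [eval_mul, eval_mul, eval_C, eval_pow, eval_X, eval_map_algebraMap]; ring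
  have hFG : F = G := by
    refine eq_of_infinite_eval_eq F G ((hS.sdiff (Set.finite_singleton 0)).mono ?_)
    rintro u ⟨huS, hu0⟩
    simp only [Set.mem_ofPred_eq, hF u hu0, hG, h u huS]
  have := congrArg (eval t) hFG
  rwa [hF t ht, hG, mul_right_inj' (pow_ne_zero N ht)] at this

end CommRing

section Field

variable {K : Type*} [Field K] {t : K}

theorem reflect_X_pow_sub_C_inv (ht : t ≠ 0) (N : ℕ) :
    reflect N (X ^ N - C t⁻¹) = C (-t⁻¹) * (X ^ N - C t) := by
  rw [reflect_sub, reflect_monomial, revAt_le le_rfl, Nat.sub_self, reflect_C, mul_sub, ← C_mul,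
    neg_mul, inv_mul_cancel₀ ht]
  simp only [map_neg, map_one, pow_zero]
  ring

theorem reflect_one_sub_C_inv_mul_X_pow (ht : t ≠ 0) (N : ℕ) :
    reflect N (1 - C t⁻¹ * X ^ N) = C (-t⁻¹) * (1 - C t * X ^ N) := by
  rw [reflect_sub, reflect_one, reflect_C_mul_X_pow, revAt_le le_rfl, Nat.sub_self, mul_sub,
    ← mul_assoc, ← C_mul, neg_mul, inv_mul_cancel₀ ht]
  simp only [map_neg, map_one, pow_zero]
  ring

theorem natDegree_one_sub_C_mul_X_pow (ht : t ≠ 0) {N : ℕ} (hN : N ≠ 0) :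
    (1 - C t * X ^ N).natDegree = N := by
  have h := natDegree_C_mul_X_pow N t ht
  rw [natDegree_sub_eq_right_of_natDegree_lt (by rw [h, natDegree_one]; omega), h]

theorem isCoprime_one_sub_C_mul_X_pow_X_pow_sub_C (ht : ¬IsOfFinOrder t) {a b : ℕ}
    (hab : a + b ≠ 0) : IsCoprime (1 - C t * X ^ a) (X ^ b - C t) := by
  rw [isCoprime_iff_aeval_ne_zero_of_isAlgClosed K (AlgebraicClosure K)]
  intro z
  by_contra! hz
  simp only [map_sub, map_one, map_mul, aeval_C, aeval_X_pow] at hz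
  obtain ⟨hza, hzb⟩ := hz
  set T := algebraMap K (AlgebraicClosure K) t
  have hpow : algebraMap K (AlgebraicClosure K) (t ^ (a + b)) = 1 := by
    calc algebraMap K _ (t ^ (a + b)) = T ^ b * (z ^ b) ^ a := by
          rw [map_pow, sub_eq_zero.mp hzb, pow_add, mul_comm]
      _ = (T * z ^ a) ^ b := by ring
      _ = 1 := by rw [← sub_eq_zero.mp hza, one_pow]
  exact ht (isOfFinOrder_iff_pow_eq_one.mpr ⟨a + b, Nat.pos_of_ne_zero hab,
    (algebraMap K (AlgebraicClosure K)).injective (by rw [hpow, map_one])⟩)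

theorem eq_of_add_mul_eq_add_mul {P Q A₁ B₁ A₂ B₂ : K[X]} (hPQ : IsCoprime P Q)
    (h₁ : A₁.natDegree < P.natDegree) (h₂ : A₂.natDegree < P.natDegree)
    (h : A₁ * Q + B₁ * P = A₂ * Q + B₂ * P) : A₁ = A₂ := by
  have hdvd : P ∣ (A₁ - A₂) * Q := ⟨B₂ - B₁, by linear_combination h⟩
  refine sub_eq_zero.mp (eq_zero_of_dvd_of_natDegree_lt (hPQ.dvd_of_dvd_mul_right hdvd) ?_)
  exact (natDegree_sub_le _ _).trans_lt (max_lt h₁ h₂)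

end Field

end Polynomial

theorem Finset.pow_sum_mul_prod_one_sub_inv_pow {ι K : Type*} [Field K] (I : Finset ι)
    (e : ι → ℕ) {t : K} (ht : t ≠ 0) :
    t ^ (∑ i ∈ I, e i) * ∏ i ∈ I, (1 - t⁻¹ ^ e i) = (-1) ^ #I * ∏ i ∈ I, (1 - t ^ e i) := by
  rw [← prod_pow_eq_pow_sum, ← prod_mul_distrib, ← prod_neg]
  refine prod_congr rfl fun i _ => ?_
  rw [mul_sub, mul_one, inv_pow, mul_inv_cancel₀ (pow_ne_zero _ ht), neg_sub]

theorem sum_Icc_one_two_mul_sub_one (s : ℕ) : ∑ i ∈ Icc 1 s, (2 * i - 1) = s ^ 2 := by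
  induction s with
  | zero => simp
  | succ s ih =>
    rw [sum_Icc_succ_top (by omega), ih, show 2 * (s + 1) - 1 = 2 * s + 1 by omega]
    ring

theorem sum_Icc_two_two_mul_add_two (v : ℕ) :
    ∑ i ∈ Icc 2 (2 * v + 2), 2 * i = (2 * v + 4) * (2 * v + 1) := by
  induction v with
  | zero => simp
  | succ v ih =>
    rw [show 2 * (v + 1) + 2 = 2 * v + 2 + 1 + 1 by ring, sum_Icc_succ_top (by omega),
      sum_Icc_succ_top (by omega), ih]
    ring

section Specialization

variable {K : Type*} [Field K] {t : K}

theorem pow_mul_aeval_inv_rOdd (ht : t ≠ 0) {s : ℕ} (hs : 2 ≤ s) :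
    t ^ (2 * s * (2 * s - 3)) * aeval t⁻¹ (rOdd (2 * s - 1)) = -aeval t (rOdd (2 * s - 1)) := by
  obtain ⟨v, rfl⟩ : ∃ v, s = v + 2 := ⟨s - 2, by omega⟩
  have hd : 2 * (v + 2) * (2 * (v + 2) - 3) = ∑ i ∈ Icc 2 (2 * v + 2), 2 * i := by
    rw [sum_Icc_two_two_mul_add_two, show 2 * (v + 2) - 3 = 2 * v + 1 by omega]
    ring
  simp only [rOdd, map_prod, map_sub, map_one, map_pow, aeval_X]
  rw [show 2 * (v + 2) - 1 - 1 = 2 * v + 2 by omega, hd,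
    pow_sum_mul_prod_one_sub_inv_pow _ _ ht, Nat.card_Icc,
    show 2 * v + 2 + 1 - 2 = 2 * v + 1 by omega, (odd_two_mul_add_one v).neg_one_pow, neg_one_mul]

theorem map_pOdd (f : ℤ[X] →+* K) (s : ℕ) :
    (pOdd s).map f = ∏ i ∈ Icc 1 s, (1 - C (f X) * X ^ (2 * i - 1)) := by
  simp [pOdd, Polynomial.map_prod]

theorem map_qOdd (f : ℤ[X] →+* K) (s : ℕ) :
    (qOdd s).map f = ∏ i ∈ Icc 1 s, (X ^ (2 * i - 1) - C (f X)) := by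
  simp [qOdd, Polynomial.map_prod]

theorem map_phiOdd (f : ℤ[X] →+* K) (n : ℕ) {m : ℕ} (hm : 2 ≤ m) :
    (phiOdd n m).map f = C (f (rOdd n)) * (X ^ m - X ^ (m - 2)) := by
  have hXm : (X : K[X]) ^ (m - 2) * X ^ 2 = X ^ m := by rw [← pow_add, Nat.sub_add_cancel hm]
  simp only [phiOdd, Polynomial.map_mul, Polynomial.map_pow, Polynomial.map_sub, map_X,
    Polynomial.map_one, map_C]
  linear_combination C (f (rOdd n)) * hXm

theorem natDegree_map_pOdd_le (f : ℤ[X] →+* K) (s : ℕ) : ((pOdd s).map f).natDegree ≤ s ^ 2 := by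
  rw [map_pOdd, ← sum_Icc_one_two_mul_sub_one]
  refine (natDegree_prod_le _ _).trans (sum_le_sum fun i _ => ?_)
  exact (natDegree_sub_le _ _).trans (max_le (by simp) (natDegree_C_mul_X_pow_le _ _))

theorem natDegree_map_qOdd_le (f : ℤ[X] →+* K) (s : ℕ) : ((qOdd s).map f).natDegree ≤ s ^ 2 := by
  rw [map_qOdd, ← sum_Icc_one_two_mul_sub_one]
  exact (natDegree_prod_le _ _).trans (sum_le_sum fun i _ => natDegree_X_pow_sub_C.le)

theorem natDegree_map_pOdd (ht : t ≠ 0) (s : ℕ) :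
    ((pOdd s).map (aeval t).toRingHom).natDegree = s ^ 2 := by
  have hdeg : ∀ i ∈ Icc 1 s, (1 - C t * X ^ (2 * i - 1) : K[X]).natDegree = 2 * i - 1 :=
    fun i hi => natDegree_one_sub_C_mul_X_pow ht (by grind)
  rw [map_pOdd, AlgHom.toRingHom_eq_coe, RingHom.coe_coe, aeval_X, natDegree_prod,
    sum_congr rfl hdeg, sum_Icc_one_two_mul_sub_one]
  intro i hi h0
  have := hdeg i hi
  grind [natDegree_zero]

theorem isCoprime_map_pOdd_map_qOdd (ht : ¬IsOfFinOrder t) (s : ℕ) :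
    IsCoprime ((pOdd s).map (aeval t).toRingHom) ((qOdd s).map (aeval t).toRingHom) := by
  rw [map_pOdd, map_qOdd, AlgHom.toRingHom_eq_coe, RingHom.coe_coe, aeval_X]
  refine IsCoprime.prod_left fun i hi => IsCoprime.prod_right fun j hj => ?_
  exact isCoprime_one_sub_C_mul_X_pow_X_pow_sub_C ht (by grind)

theorem reflect_map_pOdd (ht : t ≠ 0) (s : ℕ) :
    reflect (s ^ 2) ((pOdd s).map (aeval t⁻¹).toRingHom) =
      C ((-t⁻¹) ^ s) * (pOdd s).map (aeval t).toRingHom := by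
  simp only [map_pOdd, AlgHom.toRingHom_eq_coe, RingHom.coe_coe, aeval_X]
  rw [← sum_Icc_one_two_mul_sub_one, reflect_prod _ _ _ fun i _ => ?_,
    prod_congr rfl fun i _ => reflect_one_sub_C_inv_mul_X_pow ht _, prod_mul_distrib, prod_const,
    Nat.card_Icc, Nat.add_sub_cancel, map_pow]
  exact (natDegree_sub_le _ _).trans (max_le (by simp) (natDegree_C_mul_X_pow_le _ _))

theorem reflect_map_qOdd (ht : t ≠ 0) (s : ℕ) :
    reflect (s ^ 2) ((qOdd s).map (aeval t⁻¹).toRingHom) =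
      C ((-t⁻¹) ^ s) * (qOdd s).map (aeval t).toRingHom := by
  simp only [map_qOdd, AlgHom.toRingHom_eq_coe, RingHom.coe_coe, aeval_X]
  rw [← sum_Icc_one_two_mul_sub_one, reflect_prod _ _ _ fun i _ => natDegree_X_pow_sub_C.le,
    prod_congr rfl fun i _ => reflect_X_pow_sub_C_inv ht _, prod_mul_distrib, prod_const,
    Nat.card_Icc, Nat.add_sub_cancel, map_pow]

theorem reflect_map_phiOdd (ht : t ≠ 0) {s : ℕ} (hs : 2 ≤ s) :
    C (t ^ (2 * s * (2 * s - 3))) *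
        reflect (2 * s ^ 2 - 2) ((phiOdd (2 * s - 1) (s ^ 2)).map (aeval t⁻¹).toRingHom) =
      (phiOdd (2 * s - 1) (s ^ 2)).map (aeval t).toRingHom := by
  have hm : 2 ≤ s ^ 2 := by nlinarith
  rw [map_phiOdd _ _ hm, map_phiOdd _ _ hm, reflect_C_mul, mul_sub, reflect_sub,
    reflect_monomial, reflect_monomial, revAt_le (by omega), revAt_le (by omega),
    show 2 * s ^ 2 - 2 - s ^ 2 = s ^ 2 - 2 by omega,
    show 2 * s ^ 2 - 2 - (s ^ 2 - 2) = s ^ 2 by omega]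
  have hr := congrArg C (pow_mul_aeval_inv_rOdd ht hs)
  simp only [AlgHom.toRingHom_eq_coe, RingHom.coe_coe, C_mul, map_neg] at hr ⊢
  linear_combination (X ^ (s ^ 2 - 2) - X ^ s ^ 2 : K[X]) * hr

variable {s : ℕ} {a b : ℤ[X][X]}

theorem map_aeval_eq_C_mul_reflect (ht₀ : t ≠ 0) (ht : ¬IsOfFinOrder t) (hs : 2 ≤ s)
    (ha : a.natDegree ≤ s ^ 2 - 2) (hb : b.natDegree ≤ s ^ 2 - 2)
    (hdecomp : phiOdd (2 * s - 1) (s ^ 2) = a * qOdd s + b * pOdd s) :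
    a.map (aeval t).toRingHom =
      C ((-1) ^ s * t ^ (2 * s * (2 * s - 3) - s)) *
        reflect (s ^ 2 - 2) (a.map (aeval t⁻¹).toRingHom) := by
  have hm : 4 ≤ s ^ 2 := by nlinarith
  have hdecomp' (f : ℤ[X] →+* K) :
      (phiOdd (2 * s - 1) (s ^ 2)).map f = a.map f * (qOdd s).map f + b.map f * (pOdd s).map f := by
    rw [hdecomp, Polynomial.map_add, Polynomial.map_mul, Polynomial.map_mul]
  have hc : C (t ^ (2 * s * (2 * s - 3))) * C ((-t⁻¹) ^ s) =
      C ((-1) ^ s * t ^ (2 * s * (2 * s - 3) - s)) := by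
    have hsd : s ≤ 2 * s * (2 * s - 3) := le_mul_of_le_of_one_le (by omega) (by omega)
    rw [← C_mul, neg_pow, inv_pow, ← pow_sub_mul_pow t hsd]
    field_simp
  set e₁ := (aeval t : ℤ[X] →ₐ[ℤ] K).toRingHom
  set e₂ := (aeval t⁻¹ : ℤ[X] →ₐ[ℤ] K).toRingHom
  set c := (-1) ^ s * t ^ (2 * s * (2 * s - 3) - s)
  have hreflected : (phiOdd (2 * s - 1) (s ^ 2)).map e₁ =
      (C c * reflect (s ^ 2 - 2) (a.map e₂)) * (qOdd s).map e₁ +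
        (C c * reflect (s ^ 2 - 2) (b.map e₂)) * (pOdd s).map e₁ := by
    rw [← reflect_map_phiOdd ht₀ hs, hdecomp', reflect_add,
      show 2 * s ^ 2 - 2 = s ^ 2 - 2 + s ^ 2 by omega,
      reflect_mul _ _ (natDegree_map_le.trans ha) (natDegree_map_qOdd_le _ _),
      reflect_mul _ _ (natDegree_map_le.trans hb) (natDegree_map_pOdd_le _ _),
      reflect_map_qOdd ht₀, reflect_map_pOdd ht₀]
    linear_combination (reflect (s ^ 2 - 2) (a.map e₂) * (qOdd s).map e₁ +
      reflect (s ^ 2 - 2) (b.map e₂) * (pOdd s).map e₁) * hc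
  refine eq_of_add_mul_eq_add_mul (isCoprime_map_pOdd_map_qOdd ht s) ?_ ?_
    ((hdecomp' e₁).symm.trans hreflected) <;> rw [natDegree_map_pOdd ht₀]
  · exact (natDegree_map_le.trans ha).trans_lt (by omega)
  · refine ((natDegree_C_mul_le _ _).trans natDegree_reflect_le).trans_lt (max_lt (by omega) ?_)
    exact (natDegree_map_le.trans ha).trans_lt (by omega)

theorem pow_mul_aeval_inv_coeff (ht₀ : t ≠ 0) (ht : ¬IsOfFinOrder t) (hs : 2 ≤ s)
    (ha : a.natDegree ≤ s ^ 2 - 2) (hb : b.natDegree ≤ s ^ 2 - 2)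
    (hdecomp : phiOdd (2 * s - 1) (s ^ 2) = a * qOdd s + b * pOdd s) {k : ℕ} (hk : k ≤ s ^ 2 - 2) :
    t ^ (2 * s * (2 * s - 3) - s) * aeval t⁻¹ (a.coeff k) =
      (-1) ^ s * aeval t (a.coeff (s ^ 2 - 2 - k)) := by
  have h := congrArg (coeff · (s ^ 2 - 2 - k)) (map_aeval_eq_C_mul_reflect ht₀ ht hs ha hb hdecomp)
  simp only [coeff_map, coeff_C_mul, coeff_reflect, revAt_le (Nat.sub_le _ _), Nat.sub_sub_self hk,
    AlgHom.toRingHom_eq_coe, RingHom.coe_coe] at h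
  rw [h, ← mul_assoc, ← mul_assoc, ← mul_pow, neg_one_mul, neg_neg, one_pow, one_mul]

end Specialization

theorem stmt9_general (n s m d : ℕ) (hn : 3 ≤ n) (hs : n = 2 * s - 1)
    (hm : m = s ^ 2) (hd : d = 2 * s * (n - 2))
    (a b : Polynomial (Polynomial ℤ))
    (ha : a.natDegree ≤ m - 2) (hb : b.natDegree ≤ m - 2)
    (hdecomp : phiOdd n m = a * qOdd s + b * pOdd s) :
    ∀ k ≤ m - 2, ∀ t : ℚ, t ≠ 0 →
      t ^ (d - s) * Polynomial.aeval t⁻¹ (a.coeff k) =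
        (-1) ^ (n + s + 1) * Polynomial.aeval t (a.coeff (m - 2 - k)) := by
  subst hs hm hd
  intro k hk t ht
  have hs : 2 ≤ s := by omega
  rw [show 2 * s - 1 - 2 = 2 * s - 3 by omega, show 2 * s - 1 + s + 1 = 2 * s + s by omega, pow_add,
    pow_mul, neg_one_sq, one_pow, one_mul]
  refine pow_mul_aeval_inv_eq_of_infinite (Set.Ioi_infinite 1) (fun u (hu : 1 < u) => ?_) ht
  have hu_ord : ¬IsOfFinOrder u := fun h =>
    have ⟨j, hj, hpow⟩ := isOfFinOrder_iff_pow_eq_one.mp h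
    (one_lt_pow₀ hu hj.ne').ne' hpow
  exact pow_mul_aeval_inv_coeff (by positivity) hu_ord hs ha hb hdecomp hk

/-- Writing a_n = Σ α_k(t) z^k, the symmetry
t^(d-s) α_k(1/t) = (-1)^(n+s+1) α_{m-2-k}(t) holds. -/
theorem stmt9 (n s m d : ℕ) (hn : 3 ≤ n) (hodd : Odd n) (hs : n = 2 * s - 1)
    (hm : m = s ^ 2) (hd : d = 2 * s * (n - 2))
    (a b : Polynomial (Polynomial ℤ))
    (ha : a.natDegree ≤ m - 2) (hb : b.natDegree ≤ m - 2)
    (hdecomp : phiOdd n m = a * qOdd s + b * pOdd s) :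
    ∀ k ≤ m - 2, ∀ t : ℚ, t ≠ 0 →
      t ^ (d - s) * Polynomial.aeval t⁻¹ (a.coeff k) =
        (-1) ^ (n + s + 1) * Polynomial.aeval t (a.coeff (m - 2 - k)) :=
  stmt9_general n s m d hn hs hm hd a b ha hb hdecomp
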